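/- arXiv:math/0501509 — 2 statements merged into one kernel-verified Lean document; each statement's English description precedes it below -/
import Mathlib

section
/- Let X be a topological space, x₀ ∈ X, and U : ℕ → Set X a family of open subsets with U n ⊆ U (n+1) for every n, ⋃_n U n = X, and x₀ ∈ U 0. Suppose each subspace U n is path-connected, and that for every n the homomorphism of fundamental groups π₁(U n, x₀) → π₁(U (n+1), x₀) induced by the inclusion U n ↪ U (n+1) is trivial (sends every element to the identity). Then X is simply connected (path-connected with trivial fundamental group). -/
open CategoryTheory

attribute [local instance] Path.Homotopic.setoid

/-- If a topological space `X` is an increasing union of open subsets `U n`, each path-connected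
and containing a common basepoint `x₀`, such that every inclusion `U n ↪ U (n+1)` induces the
trivial homomorphism on fundamental groups (i.e. every loop at `x₀` in `U n` becomes
nullhomotopic in `U (n+1)`), then `X` is simply connected. -/
theorem simplyConnected_of_increasing_union_pi1_trivial
    (X : Type*) [TopologicalSpace X] (x₀ : X) (U : ℕ → Set X)
    (hopen : ∀ n, IsOpen (U n))
    (hmono : ∀ n, U n ⊆ U (n + 1))
    (hunion : ⋃ n, U n = Set.univ)
    (hx₀ : x₀ ∈ U 0)
    (hpc : ∀ n, PathConnectedSpace (U n))
    (htriv : ∀ (n : ℕ) (h : x₀ ∈ U n) (γ : Path (⟨x₀, h⟩ : U n) ⟨x₀, h⟩),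
      (γ.map (continuous_inclusion (hmono n))).Homotopic
        (Path.refl (Set.inclusion (hmono n) ⟨x₀, h⟩))) :
    SimplyConnectedSpace X := by
  -- the basepoint lies in every `U n`
  have hx : ∀ n, x₀ ∈ U n := by
    intro n
    induction n with
    | zero => exact hx₀
    | succ n ih => exact hmono n ih
  have hUmono : Monotone U := monotone_nat_of_le_succ hmono
  -- `X` is path connected: join everything to `x₀`
  have hjoin : ∀ x : X, Joined x₀ x := by
    intro x
    have hxU : x ∈ ⋃ n, U n := hunion ▸ Set.mem_univ x
    obtain ⟨n, hn⟩ := Set.mem_iUnion.mp hxU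
    obtain ⟨p⟩ := (hpc n).joined ⟨x₀, hx n⟩ ⟨x, hn⟩
    exact ⟨p.map continuous_subtype_val⟩
  have hPC : PathConnectedSpace X := ⟨⟨x₀⟩, fun x y => (hjoin x).symm.trans (hjoin y)⟩
  -- every loop at `x₀` in `X` is nullhomotopic
  have hloop : ∀ γ : Path x₀ x₀, γ.Homotopic (Path.refl x₀) := by
    intro γ
    have hcomp : IsCompact (Set.range γ) := isCompact_range γ.continuous
    obtain ⟨n, hsub⟩ := hcomp.elim_directed_cover U hopen
      (by rw [hunion]; exact Set.subset_univ _) hUmono.directed_le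
    -- lift `γ` to a loop in `U n`
    set γ' : Path (⟨x₀, hx n⟩ : U n) ⟨x₀, hx n⟩ :=
      { toFun := fun t => ⟨γ t, hsub (Set.mem_range_self t)⟩
        continuous_toFun := γ.continuous.subtype_mk _
        source' := by ext; simp
        target' := by ext; simp } with hγ'
    have h2 := htriv n (hx n) γ'
    have h3 := h2.map ⟨Subtype.val, continuous_subtype_val⟩
    have e1 : ((γ'.map (continuous_inclusion (hmono n))).map
        (continuous_subtype_val (p := (· ∈ U (n + 1))))) = γ := by
      ext t
      rfl
    have e2 : ((Path.refl (Set.inclusion (hmono n) (⟨x₀, hx n⟩ : U n))).map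
        (continuous_subtype_val (p := (· ∈ U (n + 1))))) = Path.refl x₀ := by
      ext t
      rfl
    rwa [e1, e2] at h3
  -- all endomorphisms of `x₀` in the fundamental groupoid agree
  have key : ∀ f g : (⟨x₀⟩ : FundamentalGroupoid X) ⟶ ⟨x₀⟩, f = g := by
    have h1 : ∀ f : (⟨x₀⟩ : FundamentalGroupoid X) ⟶ ⟨x₀⟩, f = 𝟙 _ := by
      intro f
      induction f using Quotient.inductionOn with
      | h p => exact Quotient.sound (hloop p)
    intro f g
    rw [h1 f, h1 g]
  rw [simply_connected_iff_paths_homotopic]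
  refine ⟨hPC, fun x y => ⟨fun P Q => ?_⟩⟩
  obtain ⟨a⟩ := hjoin x
  obtain ⟨b⟩ := hjoin y
  let A : (⟨x₀⟩ : FundamentalGroupoid X) ⟶ ⟨x⟩ := ⟦a⟧
  let B : (⟨y⟩ : FundamentalGroupoid X) ⟶ ⟨x₀⟩ := ⟦b.symm⟧
  let P' : (⟨x⟩ : FundamentalGroupoid X) ⟶ ⟨y⟩ := P
  let Q' : (⟨x⟩ : FundamentalGroupoid X) ⟶ ⟨y⟩ := Q
  have h4 : A ≫ P' ≫ B = A ≫ Q' ≫ B := key _ _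
  rw [cancel_epi A] at h4
  have h5 : P' = Q' := by
    have := (cancel_mono B).mp h4
    exact this
  exact h5
end

section
/- Let f : ℝ → EuclideanSpace ℝ (Fin 4) be infinitely differentiable (ContDiff ℝ ⊤) and let ε > 0. Then there exists g : ℝ → EuclideanSpace ℝ (Fin 4) which is real-analytic on a neighborhood of the interval [0,1], such that g(0) = f(0), g(1) = f(1), the derivatives agree at the endpoints (deriv g 0 = deriv f 0 and deriv g 1 = deriv f 1), and for every t ∈ [0,1], ‖g t − f t‖ + ‖deriv g t − deriv f t‖ < ε. -/
open Polynomial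

noncomputable def pAnti (p : ℝ[X]) : ℝ[X] := p.sum fun n a => C (a / (n+1)) * X ^ (n+1)

lemma pAnti_deriv (p : ℝ[X]) : (pAnti p).derivative = p := by
  conv_rhs => rw [← p.sum_C_mul_X_pow_eq]
  unfold pAnti Polynomial.sum
  rw [map_sum]
  refine Finset.sum_congr rfl fun n _ => ?_
  rw [derivative_C_mul_X_pow]
  simp only [Nat.add_sub_cancel]
  congr 1
  congr 1
  field_simp
  norm_num

/-- A smooth arc `f : ℝ → ℝ⁴` can be `C¹`-approximated on `[0,1]` by a map `g` that is
real-analytic on a neighborhood of `[0,1]`, agreeing with `f` together with its derivative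
at the endpoints `0` and `1`. -/
theorem smooth_arc_analytic_approx
    (f : ℝ → EuclideanSpace ℝ (Fin 4)) (hf : ContDiff ℝ (⊤ : ℕ∞) f)
    (ε : ℝ) (hε : 0 < ε) :
    ∃ (g : ℝ → EuclideanSpace ℝ (Fin 4)) (V : Set ℝ),
      IsOpen V ∧ Set.Icc (0 : ℝ) 1 ⊆ V ∧ AnalyticOnNhd ℝ g V ∧
      g 0 = f 0 ∧ g 1 = f 1 ∧
      deriv g 0 = deriv f 0 ∧ deriv g 1 = deriv f 1 ∧
      ∀ t ∈ Set.Icc (0 : ℝ) 1, ‖g t - f t‖ + ‖deriv g t - deriv f t‖ < ε := by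
  classical
  set D : ℝ := ε / 64 with hD
  have hDpos : 0 < D := by positivity
  have hf' : Continuous (deriv f) := hf.continuous_deriv (by simp)
  have hcoord : ∀ i : Fin 4, ContinuousOn (fun t => deriv f t i) (Set.Icc (0:ℝ) 1) := by
    intro i
    exact (((continuous_apply i).comp
      ((PiLp.continuous_ofLp 2 (fun _ : Fin 4 => ℝ)).comp hf'))).continuousOn
  choose p hp using fun i : Fin 4 =>
    exists_polynomial_near_of_continuousOn 0 1 (fun t => deriv f t i) (hcoord i) (D/2)
      (by positivity)
  let L : (Fin 4 → ℝ) ≃L[ℝ] EuclideanSpace ℝ (Fin 4) := (EuclideanSpace.equiv (Fin 4) ℝ).symm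
  let q : ℝ → EuclideanSpace ℝ (Fin 4) := fun t => L (fun i => (p i).eval t)
  let Q : ℝ → EuclideanSpace ℝ (Fin 4) := fun t => L (fun i => (pAnti (p i)).eval t)
  -- derivative of Q
  have hQ : ∀ t : ℝ, HasDerivAt Q (q t) t := by
    intro t
    have hu : HasDerivAt (fun t : ℝ => fun i : Fin 4 => (pAnti (p i)).eval t)
        (fun i => (p i).eval t) t := by
      refine hasDerivAt_pi.2 fun i => ?_
      simpa [pAnti_deriv] using (pAnti (p i)).hasDerivAt t
    exact (L.toContinuousLinearMap.hasFDerivAt.comp_hasDerivAt t hu)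
  -- coordinatewise bound gives vector bound
  have hqf : ∀ t ∈ Set.Icc (0:ℝ) 1, ‖q t - deriv f t‖ ≤ D := by
    intro t ht
    have hcoordb : ∀ i : Fin 4, ‖(q t - deriv f t) i‖ ≤ D / 2 := by
      intro i
      have : (q t - deriv f t) i = (p i).eval t - deriv f t i := rfl
      rw [this]
      exact (le_of_lt (hp i t ht))
    rw [EuclideanSpace.norm_eq]
    have hsum : ∑ i : Fin 4, ‖(q t - deriv f t) i‖ ^ 2 ≤ D ^ 2 := by
      calc ∑ i : Fin 4, ‖(q t - deriv f t) i‖ ^ 2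
          ≤ ∑ _i : Fin 4, (D/2) ^ 2 := by
            refine Finset.sum_le_sum fun i _ => ?_
            exact pow_le_pow_left₀ (norm_nonneg _) (hcoordb i) 2
        _ = 4 * (D/2)^2 := by
            rw [Finset.sum_const]
            norm_num
        _ ≤ D ^ 2 := by nlinarith
    calc Real.sqrt (∑ i : Fin 4, ‖(q t - deriv f t) i‖ ^ 2)
        ≤ Real.sqrt (D ^ 2) := Real.sqrt_le_sqrt hsum
      _ = D := Real.sqrt_sq hDpos.le
  -- P and the MVT bound
  set P : ℝ → EuclideanSpace ℝ (Fin 4) := fun t => f 0 + (Q t - Q 0) with hPdef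
  have hfd : ∀ t : ℝ, HasDerivAt f (deriv f t) t :=
    fun t => (hf.differentiable (by simp) t).hasDerivAt
  have hFd : ∀ t : ℝ, HasDerivAt (fun t => f t - P t) (deriv f t - q t) t := by
    intro t
    exact (hfd t).sub (((hQ t).sub_const (Q 0)).const_add (f 0))
  have hPf : ∀ t ∈ Set.Icc (0:ℝ) 1, ‖f t - P t‖ ≤ D := by
    intro t ht
    have h0 : f 0 - P 0 = 0 := by simp [hPdef]
    have := (convex_Icc (0:ℝ) 1).norm_image_sub_le_of_norm_hasDerivWithin_le
      (f' := fun t => deriv f t - q t)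
      (fun x hx => (hFd x).hasDerivWithinAt)
      (fun x hx => by
        rw [← norm_neg]; simpa [neg_sub] using hqf x hx)
      (Set.left_mem_Icc.2 zero_le_one) ht
    rw [h0, sub_zero] at this
    calc ‖f t - P t‖ ≤ D * ‖t - 0‖ := this
      _ ≤ D * 1 := by
          have : ‖t - 0‖ ≤ 1 := by
            rw [sub_zero, Real.norm_eq_abs, abs_le]
            exact ⟨by linarith [ht.1], ht.2⟩
          nlinarith
      _ = D := mul_one D
  -- endpoint corrections
  set e1 : EuclideanSpace ℝ (Fin 4) := f 1 - P 1 with he1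
  set d0 : EuclideanSpace ℝ (Fin 4) := deriv f 0 - q 0 with hd0
  set d1 : EuclideanSpace ℝ (Fin 4) := deriv f 1 - q 1 with hd1
  have he1n : ‖e1‖ ≤ D := hPf 1 (Set.right_mem_Icc.2 zero_le_one)
  have hd0n : ‖d0‖ ≤ D := by
    rw [hd0, ← norm_neg, neg_sub]; exact hqf 0 (Set.left_mem_Icc.2 zero_le_one)
  have hd1n : ‖d1‖ ≤ D := by
    rw [hd1, ← norm_neg, neg_sub]; exact hqf 1 (Set.right_mem_Icc.2 zero_le_one)
  set c : ℝ → EuclideanSpace ℝ (Fin 4) := fun t =>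
    (t^3 - 2*t^2 + t) • d0 + (-(2*t^3) + 3*t^2) • e1 + (t^3 - t^2) • d1 with hc
  set c' : ℝ → EuclideanSpace ℝ (Fin 4) := fun t =>
    (3*t^2 - 4*t + 1) • d0 + (-(6*t^2) + 6*t) • e1 + (3*t^2 - 2*t) • d1 with hc'
  have hcd : ∀ t : ℝ, HasDerivAt c (c' t) t := by
    intro t
    have h1 : HasDerivAt (fun t : ℝ => t^3 - 2*t^2 + t) (3*t^2 - 4*t + 1) t := by
      have := ((hasDerivAt_pow 3 t).sub ((hasDerivAt_pow 2 t).const_mul 2)).add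
        (hasDerivAt_id t)
      exact this.congr_deriv (by push_cast; ring)
    have h2 : HasDerivAt (fun t : ℝ => -(2*t^3) + 3*t^2) (-(6*t^2) + 6*t) t := by
      have := (((hasDerivAt_pow 3 t).const_mul 2).neg).add ((hasDerivAt_pow 2 t).const_mul 3)
      exact this.congr_deriv (by push_cast; ring)
    have h3 : HasDerivAt (fun t : ℝ => t^3 - t^2) (3*t^2 - 2*t) t := by
      have := (hasDerivAt_pow 3 t).sub (hasDerivAt_pow 2 t)
      exact this.congr_deriv (by push_cast; ring)
    exact ((h1.smul_const d0).add (h2.smul_const e1)).add (h3.smul_const d1)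
  set g : ℝ → EuclideanSpace ℝ (Fin 4) := fun t => P t + c t with hg
  have hgd : ∀ t : ℝ, HasDerivAt g (q t + c' t) t := by
    intro t
    exact (((hQ t).sub_const (Q 0)).const_add (f 0)).add (hcd t)
  have hderivg : ∀ t : ℝ, deriv g t = q t + c' t := fun t => (hgd t).deriv
  refine ⟨g, Set.univ, isOpen_univ, Set.subset_univ _, ?_, ?_, ?_, ?_, ?_, ?_⟩
  · -- analyticity
    intro x _
    have hpoly : ∀ p3 : ℝ[X], AnalyticAt ℝ (fun t : ℝ => p3.eval t) x := fun p3 =>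
      (AnalyticOnNhd.eval_polynomial (𝕜 := ℝ) p3) x (Set.mem_univ x)
    have hQa : AnalyticAt ℝ Q x := by
      have hpi : AnalyticAt ℝ (fun t : ℝ => fun i : Fin 4 => (pAnti (p i)).eval t) x :=
        AnalyticAt.pi fun i => hpoly (pAnti (p i))
      exact (L.toContinuousLinearMap.analyticAt _).comp hpi
    have hid : AnalyticAt ℝ (fun t : ℝ => t) x := analyticAt_id
    have h1 : AnalyticAt ℝ (fun t : ℝ => t^3 - 2*t^2 + t) x :=
      ((hid.pow 3).sub (analyticAt_const.mul (hid.pow 2))).add hid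
    have h2 : AnalyticAt ℝ (fun t : ℝ => -(2*t^3) + 3*t^2) x :=
      ((analyticAt_const.mul (hid.pow 3)).neg).add (analyticAt_const.mul (hid.pow 2))
    have h3 : AnalyticAt ℝ (fun t : ℝ => t^3 - t^2) x := (hid.pow 3).sub (hid.pow 2)
    have hca : AnalyticAt ℝ c x := by
      rw [hc]
      exact ((h1.smul analyticAt_const).add (h2.smul analyticAt_const)).add
        (h3.smul analyticAt_const)
    rw [hg, hPdef]
    exact ((analyticAt_const.add (hQa.sub analyticAt_const)).add hca)
  · show P 0 + c 0 = f 0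
    simp [hPdef, hc]
  · show P 1 + c 1 = f 1
    simp only [hc, he1]
    norm_num
    try abel
  · rw [hderivg 0]
    simp only [hc', hd0]
    norm_num
    try abel
  · rw [hderivg 1]
    simp only [hc', hd1]
    norm_num
    try abel
  · intro t ht
    obtain ⟨ht0, ht1⟩ := ht
    have ht2 : t^2 ≤ 1 := by nlinarith
    have ht3 : t^3 ≤ 1 := by nlinarith
    have ht2n : (0:ℝ) ≤ t^2 := by positivity
    have ht3n : (0:ℝ) ≤ t^3 := by positivity
    have ha : |t^3 - 2*t^2 + t| ≤ 4 := by
      rw [abs_le]; constructor <;> linarith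
    have hb : |(-(2*t^3) + 3*t^2)| ≤ 5 := by
      rw [abs_le]; constructor <;> linarith
    have hcc : |t^3 - t^2| ≤ 2 := by
      rw [abs_le]; constructor <;> linarith
    have ha' : |3*t^2 - 4*t + 1| ≤ 8 := by
      rw [abs_le]; constructor <;> linarith
    have hb' : |(-(6*t^2) + 6*t)| ≤ 12 := by
      rw [abs_le]; constructor <;> linarith
    have hcc' : |3*t^2 - 2*t| ≤ 5 := by
      rw [abs_le]; constructor <;> linarith
    have hcb : ‖c t‖ ≤ 11 * D := by
      calc ‖c t‖ ≤ ‖(t^3 - 2*t^2 + t) • d0 + (-(2*t^3) + 3*t^2) • e1‖ + ‖(t^3 - t^2) • d1‖ :=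
            norm_add_le _ _
        _ ≤ ‖(t^3 - 2*t^2 + t) • d0‖ + ‖(-(2*t^3) + 3*t^2) • e1‖ + ‖(t^3 - t^2) • d1‖ := by
            gcongr; exact norm_add_le _ _
        _ ≤ 4 * D + 5 * D + 2 * D := by
            gcongr <;> rw [norm_smul, Real.norm_eq_abs] <;>
              [exact mul_le_mul ha hd0n (norm_nonneg _) (by norm_num);
               exact mul_le_mul hb he1n (norm_nonneg _) (by norm_num);
               exact mul_le_mul hcc hd1n (norm_nonneg _) (by norm_num)]
        _ = 11 * D := by ring
    have hcb' : ‖c' t‖ ≤ 25 * D := by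
      calc ‖c' t‖ ≤ ‖(3*t^2 - 4*t + 1) • d0‖ + ‖(-(6*t^2) + 6*t) • e1‖ + ‖(3*t^2 - 2*t) • d1‖ := by
            refine le_trans (norm_add_le _ _) ?_
            gcongr; exact norm_add_le _ _
        _ ≤ 8 * D + 12 * D + 5 * D := by
            gcongr <;> rw [norm_smul, Real.norm_eq_abs] <;>
              [exact mul_le_mul ha' hd0n (norm_nonneg _) (by norm_num);
               exact mul_le_mul hb' he1n (norm_nonneg _) (by norm_num);
               exact mul_le_mul hcc' hd1n (norm_nonneg _) (by norm_num)]
        _ = 25 * D := by ring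
    have h1 : ‖g t - f t‖ ≤ 12 * D := by
      have : g t - f t = c t - (f t - P t) := by rw [hg]; beta_reduce; abel
      rw [this]
      calc ‖c t - (f t - P t)‖ ≤ ‖c t‖ + ‖f t - P t‖ := norm_sub_le _ _
        _ ≤ 11 * D + D := add_le_add hcb (hPf t ⟨ht0, ht1⟩)
        _ = 12 * D := by ring
    have h2 : ‖deriv g t - deriv f t‖ ≤ 26 * D := by
      rw [hderivg t]
      have : q t + c' t - deriv f t = (q t - deriv f t) + c' t := by abel
      rw [this]
      calc ‖(q t - deriv f t) + c' t‖ ≤ ‖q t - deriv f t‖ + ‖c' t‖ := norm_add_le _ _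
        _ ≤ D + 25 * D := add_le_add (hqf t ⟨ht0, ht1⟩) hcb'
        _ = 26 * D := by ring
    calc ‖g t - f t‖ + ‖deriv g t - deriv f t‖ ≤ 12 * D + 26 * D := add_le_add h1 h2
      _ = 38 * (ε / 64) := by rw [hD]; ring
      _ < ε := by linarith
end
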